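/- arXiv:2205.13598 — 6 statements merged into one kernel-verified Lean document; each statement's English description precedes it below -/
import Mathlib

section
/- Let c be a point in the plane, and let P be a set of points contained in an open cone (sector) of angle 60° with apex c, sorted by increasing distance from c: p_1, p_2, ..., p_q (all distances distinct). Then for any indices j < i, dist(p_i, p_j) < dist(p_i, c). -/
open scoped Classical

/-- Points in an open 60° sector with apex `c`, sorted by increasing
distance from `c` (all distances distinct): for `j < i`, `dist (p i) (p j) < dist (p i) c`. -/
theorem sector_lemma (c : EuclideanSpace ℝ (Fin 2)) (q : ℕ)
    (p : Fin q → EuclideanSpace ℝ (Fin 2))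
    (hne : ∀ i, p i ≠ c)
    (hsector : ∀ i j, EuclideanGeometry.angle (p i) c (p j) < Real.pi / 3)
    (hsorted : ∀ i j : Fin q, i < j → dist (p i) c < dist (p j) c) :
    ∀ i j : Fin q, j < i → dist (p i) (p j) < dist (p i) c := by
  intro i j hji
  have hlt : dist (p j) c < dist (p i) c := hsorted j i hji
  have hjpos : 0 < dist (p j) c := dist_pos.mpr (hne j)
  have hcos : (1 : ℝ) / 2 < Real.cos (EuclideanGeometry.angle (p i) c (p j)) := by
    have := Real.cos_lt_cos_of_nonneg_of_le_pi
      (EuclideanGeometry.angle_nonneg (p i) c (p j))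
      (by linarith [Real.pi_pos]) (hsector i j)
    rwa [Real.cos_pi_div_three] at this
  have hlaw := EuclideanGeometry.law_cos (p i) c (p j)
  have hd : 0 ≤ dist (p i) (p j) := dist_nonneg
  have hic : 0 ≤ dist (p i) c := dist_nonneg
  nlinarith [mul_pos (hjpos.trans hlt) hjpos, mul_lt_mul_of_pos_left hcos (mul_pos (hjpos.trans hlt) hjpos)]
end

section
/- Let c be a point in the plane and P a finite set of points in an open 60° sector with apex c, with all pairwise and c-distances distinct. Then for every integer s ≥ 1, at most s points p of P satisfy: c is among the s nearest points to p in P ∪ {c} \ {p}. (Equivalently, c is ranked within the top s by at most s points of the sector.) -/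
open scoped Classical

/-- In an open 60° sector with apex `c` (all pairwise and `c`-distances
distinct), for every `s ≥ 1`, at most `s` points `p` of `P` have `c` among their `s`
nearest points of `P ∪ {c} \ {p}` (i.e. fewer than `s` points of `P \ {p}` are
strictly closer to `p` than `c` is). -/
theorem sector_top_s (c : EuclideanSpace ℝ (Fin 2)) (P : Finset (EuclideanSpace ℝ (Fin 2)))
    (hcP : c ∉ P)
    (hsector : ∀ p ∈ P, p ≠ c ∧ ∀ q ∈ P, EuclideanGeometry.angle p c q < Real.pi / 3)
    (hdist : ∀ x ∈ insert c P, ∀ y ∈ insert c P, ∀ z ∈ insert c P, ∀ w ∈ insert c P,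
      x ≠ y → z ≠ w → dist x y = dist z w → (x = z ∧ y = w) ∨ (x = w ∧ y = z))
    (s : ℕ) (hs : 1 ≤ s) :
    (P.filter fun p =>
      ((P.erase p).filter fun q => dist p q < dist p c).card < s).card ≤ s := by
  classical
  -- Geometric key: points closer to c are closer to p than c is
  have key : ∀ p ∈ P, ∀ q ∈ P, dist c q < dist c p → dist p q < dist p c := by
    intro p hp q hq hlt
    have hpc : p ≠ c := (hsector p hp).1
    have hqc : q ≠ c := (hsector q hq).1
    have hang : EuclideanGeometry.angle p c q < Real.pi / 3 := (hsector p hp).2 q hq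
    have hnn : 0 ≤ EuclideanGeometry.angle p c q := EuclideanGeometry.angle_nonneg p c q
    have hcos : (1:ℝ)/2 < Real.cos (EuclideanGeometry.angle p c q) := by
      have h3 : Real.pi / 3 ≤ Real.pi := by linarith [Real.pi_pos]
      have := Real.cos_lt_cos_of_nonneg_of_le_pi hnn h3 hang
      rwa [Real.cos_pi_div_three] at this
    have hlaw := EuclideanGeometry.law_cos p c q
    rw [dist_comm q c] at hlaw
    have hq0 : 0 < dist c q := dist_pos.mpr (fun h => hqc h.symm)
    have hp0 : 0 < dist p c := dist_pos.mpr hpc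
    have hdcq : dist c q < dist p c := by rwa [dist_comm p c]
    nlinarith [dist_nonneg (x := p) (y := q), mul_pos hp0 hq0,
      mul_pos hq0 (sub_pos.mpr hdcq)]
  set f : EuclideanSpace ℝ (Fin 2) → ℕ :=
    fun p => (P.filter fun q => dist c q < dist c p).card with hf
  have hmaps : ∀ p ∈ P.filter (fun p =>
      ((P.erase p).filter fun q => dist p q < dist p c).card < s), f p ∈ Finset.range s := by
    intro p hp
    simp only [Finset.mem_filter] at hp
    obtain ⟨hpP, hcard⟩ := hp
    rw [Finset.mem_range]
    calc f p ≤ ((P.erase p).filter fun q => dist p q < dist p c).card := by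
          apply Finset.card_le_card
          intro q hq
          simp only [Finset.mem_filter, Finset.mem_erase] at hq ⊢
          obtain ⟨hqP, hlt⟩ := hq
          refine ⟨⟨?_, hqP⟩, key p hpP q hqP hlt⟩
          rintro rfl
          exact lt_irrefl _ hlt
      _ < s := hcard
  have main : ∀ a ∈ P, ∀ b ∈ P, dist c a < dist c b → f a < f b := by
    intro a ha b hb hab
    apply Finset.card_lt_card
    constructor
    · intro q hq
      simp only [Finset.mem_filter] at hq ⊢
      exact ⟨hq.1, hq.2.trans hab⟩
    · intro hsub
      have : a ∈ P.filter fun q => dist c q < dist c a := hsub (by simp [ha, hab])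
      simp only [Finset.mem_filter] at this
      exact lt_irrefl _ this.2
  have hinj : Set.InjOn f (P.filter (fun p =>
      ((P.erase p).filter fun q => dist p q < dist p c).card < s)) := by
    intro p hp p' hp' hfp
    simp only [Finset.coe_filter, Set.mem_setOf_eq] at hp hp'
    by_contra hne
    have hdne : dist c p ≠ dist c p' := by
      intro h
      have hcne : c ≠ p := fun h => (hsector p hp.1).1 h.symm
      have hcne' : c ≠ p' := fun h => (hsector p' hp'.1).1 h.symm
      rcases hdist c (Finset.mem_insert_self c P) p (Finset.mem_insert_of_mem hp.1)
          c (Finset.mem_insert_self c P) p' (Finset.mem_insert_of_mem hp'.1)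
          hcne hcne' h with ⟨_, h2⟩ | ⟨h1, _⟩
      · exact hne h2
      · exact hcne' h1
    rcases lt_or_gt_of_ne hdne with h | h
    · exact absurd hfp (ne_of_lt (main p hp.1 p' hp'.1 h))
    · exact absurd hfp (ne_of_gt (main p' hp'.1 p hp.1 h))
  calc (P.filter fun p =>
        ((P.erase p).filter fun q => dist p q < dist p c).card < s).card
      ≤ (Finset.range s).card := Finset.card_le_card_of_injOn f hmaps hinj
    _ = s := Finset.card_range s
end

section
/- Let V be a finite set of points in the plane with all pairwise distances distinct, and let c ∈ V. Then for every integer s ≥ 1, the number of points v ∈ V \ {c} such that c is among the s nearest points of V \ {v} to v is at most 6s. In particular, a candidate can be one of the top-s choices of at most 6(s-1)+1 voters when the point itself is also counted as a voter. -/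
open scoped Classical

/-!
Cut the plane around `c` into six sectors of angle `π / 3`. Two voters `v, w` in one sector with
`dist v c ≤ dist w c` see each other under an angle at most `π / 3` from `c`, so by the law of
cosines `dist w v ≤ dist w c`, and the inequality is strict because distances are distinct. Hence
the voter of a sector farthest from `c` prefers every other voter of that sector to `c`, and a
sector holding more than `s` voters contains one who does not rank `c` among its top `s`.
-/

open Finset EuclideanGeometry Real

/-- The rank of the candidate `c` in the preference order of the voter `v`. -/
noncomputable def voterRank {α : Type*} [Dist α] [DecidableEq α] (V : Finset α) (v c : α) : ℕ :=
  #{c' ∈ V.erase v | dist v c' < dist v c} + 1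

theorem card_le_of_voterRank_le {α : Type*} [Dist α] [DecidableEq α] {V T : Finset α} {c : α}
    {s : ℕ} (hTV : T ⊆ V) (hrank : ∀ w ∈ T, voterRank V w c ≤ s)
    (hnear : ∀ v ∈ T, ∀ w ∈ T, v ≠ w → dist v c ≤ dist w c → dist w v < dist w c) :
    #T ≤ s := by
  obtain rfl | hT := T.eq_empty_or_nonempty
  · exact Nat.zero_le s
  obtain ⟨w, hwT, hw_far⟩ := T.exists_max_image (dist · c) hT
  have hpref : T.erase w ⊆ {c' ∈ V.erase w | dist w c' < dist w c} := fun v hv => by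
    obtain ⟨hvw, hvT⟩ := mem_erase.1 hv
    exact mem_filter.2 ⟨mem_erase.2 ⟨hvw, hTV hvT⟩, hnear v hvT w hwT hvw (hw_far v hvT)⟩
  have hcard := card_le_card hpref
  rw [card_erase_of_mem hwT] at hcard
  have hw_rank := hrank w hwT
  unfold voterRank at hw_rank
  omega

theorem EuclideanGeometry.dist_le_of_angle_le_pi_div_three {V P : Type*} [NormedAddCommGroup V]
    [InnerProductSpace ℝ V] [MetricSpace P] [NormedAddTorsor V P] {v c w : P}
    (hvw : dist v c ≤ dist w c) (hangle : ∠ v c w ≤ π / 3) : dist v w ≤ dist w c := by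
  have hcos : 1 / 2 ≤ cos (∠ v c w) := by
    rw [← cos_pi_div_three]
    exact cos_le_cos_of_nonneg_of_le_pi (angle_nonneg _ _ _) (by linarith [pi_pos]) hangle
  have hlaw := dist_sq_eq_dist_sq_add_dist_sq_sub_two_mul_dist_mul_dist_mul_cos_angle v c w
  have := mul_le_mul_of_nonneg_left hcos (by positivity : 0 ≤ 2 * dist v c * dist w c)
  nlinarith [dist_nonneg (x := v) (y := c), dist_nonneg (x := v) (y := w),
    dist_nonneg (x := w) (y := c)]

theorem Complex.angle_eq_abs_arg_sub {x y : ℂ} (hx : x ≠ 0) (hy : y ≠ 0)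
    (h : |x.arg - y.arg| < π) : InnerProductGeometry.angle x y = |x.arg - y.arg| := by
  obtain ⟨h₁, h₂⟩ := abs_lt.1 h
  rw [angle_eq_abs_arg hx hy, ← arg_coe_angle_toReal_eq_arg, arg_div_coe_angle hx hy,
    ← Real.Angle.coe_sub, Real.Angle.toReal_coe_eq_self_iff_mem_Ioc.2 ⟨h₁, h₂.le⟩]

/-- The index `k` of the sector `(k - 1) π / 3 < arg z ≤ k π / 3` containing `z`. -/
noncomputable def Complex.sector (z : ℂ) : ℤ := ⌈z.arg / (π / 3)⌉

theorem Complex.sector_mem_Icc (z : ℂ) : z.sector ∈ Icc (-2 : ℤ) 3 := by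
  have hpi : 0 < π / 3 := by positivity
  rw [mem_Icc, Complex.sector, ← Int.sub_one_lt_iff, Int.lt_ceil, Int.ceil_le, lt_div_iff₀ hpi,
    div_le_iff₀ hpi]
  push_cast
  constructor <;> linarith [neg_pi_lt_arg z, arg_le_pi z]

theorem Complex.abs_arg_sub_lt_of_sector_eq {z w : ℂ} (h : z.sector = w.sector) :
    |z.arg - w.arg| < π / 3 := by
  have hpi : 0 < π / 3 := by positivity
  have hz := Int.le_ceil (z.arg / (π / 3))
  have hz' := Int.ceil_lt_add_one (z.arg / (π / 3))
  have hw := Int.le_ceil (w.arg / (π / 3))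
  have hw' := Int.ceil_lt_add_one (w.arg / (π / 3))
  unfold Complex.sector at h
  rw [h] at hz hz'
  have : |z.arg / (π / 3) - w.arg / (π / 3)| < 1 := abs_sub_lt_iff.2 ⟨by linarith, by linarith⟩
  rwa [← sub_div, abs_div, abs_of_pos hpi, div_lt_one hpi] at this

noncomputable def planeToComplex : EuclideanSpace ℝ (Fin 2) ≃ₗᵢ[ℝ] ℂ :=
  (Complex.isometryOfOrthonormal (EuclideanSpace.basisFun (Fin 2) ℝ)).symm

theorem angle_le_pi_div_three_of_sector_eq {c v w : EuclideanSpace ℝ (Fin 2)} (hv : v ≠ c)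
    (hw : w ≠ c)
    (h : (planeToComplex (v - c)).sector = (planeToComplex (w - c)).sector) :
    ∠ v c w ≤ π / 3 := by
  have hv' : planeToComplex (v - c) ≠ 0 := by simpa [sub_eq_zero] using hv
  have hw' : planeToComplex (w - c) ≠ 0 := by simpa [sub_eq_zero] using hw
  have hlt := Complex.abs_arg_sub_lt_of_sector_eq h
  rw [EuclideanGeometry.angle, ← planeToComplex.toLinearIsometry.angle_map]
  exact (Complex.angle_eq_abs_arg_sub hv' hw' (by linarith [pi_pos])).le.trans hlt.le

theorem top_s_count_general (V : Finset (EuclideanSpace ℝ (Fin 2)))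
    (hdist : ∀ x ∈ V, ∀ y ∈ V, ∀ z ∈ V, ∀ w ∈ V,
      x ≠ y → z ≠ w → dist x y = dist z w → (x = z ∧ y = w) ∨ (x = w ∧ y = z))
    (c : EuclideanSpace ℝ (Fin 2)) (hc : c ∈ V) (s : ℕ) :
    ((V.erase c).filter fun v =>
      ((V.erase v).filter fun c' => dist v c' < dist v c).card + 1 ≤ s).card ≤ 6 * s := by
  change #{v ∈ V.erase c | voterRank V v c ≤ s} ≤ 6 * s
  set S := {v ∈ V.erase c | voterRank V v c ≤ s}
  have hS : ∀ v ∈ S, v ∈ V ∧ v ≠ c := fun v hv => by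
    obtain ⟨hv, -⟩ := mem_filter.1 hv
    exact ⟨mem_of_mem_erase hv, ne_of_mem_erase hv⟩
  have hsector : ∀ k ∈ Icc (-2 : ℤ) 3,
      #{v ∈ S | (planeToComplex (v - c)).sector = k} ≤ s := by
    intro k _
    refine card_le_of_voterRank_le (fun v hv => (hS v (mem_filter.1 hv).1).1)
      (fun w hw => (mem_filter.1 (mem_filter.1 hw).1).2) fun v hv w hw hvw hvw_c => ?_
    obtain ⟨⟨hvV, hvc⟩, hvk⟩ := (mem_filter.1 hv).imp_left (hS v)
    obtain ⟨⟨hwV, hwc⟩, hwk⟩ := (mem_filter.1 hw).imp_left (hS w)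
    have hle := dist_le_of_angle_le_pi_div_three hvw_c
      (angle_le_pi_div_three_of_sector_eq hvc hwc (hvk.trans hwk.symm))
    refine (dist_comm w v ▸ hle).lt_of_ne fun heq => ?_
    rcases hdist w hwV v hvV w hwV c hc (Ne.symm hvw) hwc heq with ⟨-, h⟩ | ⟨h, -⟩
    exacts [hvc h, hwc h]
  calc #S ≤ s * #(Icc (-2 : ℤ) 3) :=
        card_le_mul_card_image_of_maps_to (fun v _ => Complex.sector_mem_Icc _) s hsector
    _ = 6 * s := by simp [mul_comm]

/-- For a finite point set `V` in the plane with all pairwise distances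
distinct and `c ∈ V`, for every `s ≥ 1`, at most `6s` points `v ∈ V \ {c}` have `c`
among the `s` nearest points of `V \ {v}` (rank of `c` for `v` is
`1 + #{c' ∈ V \ {v} : dist v c' < dist v c}`). -/
theorem top_s_count (V : Finset (EuclideanSpace ℝ (Fin 2)))
    (hdist : ∀ x ∈ V, ∀ y ∈ V, ∀ z ∈ V, ∀ w ∈ V,
      x ≠ y → z ≠ w → dist x y = dist z w → (x = z ∧ y = w) ∨ (x = w ∧ y = z))
    (c : EuclideanSpace ℝ (Fin 2)) (hc : c ∈ V) (s : ℕ) (hs : 1 ≤ s) :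
    ((V.erase c).filter fun v =>
      ((V.erase v).filter fun c' => dist v c' < dist v c).card + 1 ≤ s).card ≤ 6 * s :=
  top_s_count_general V hdist c hc s
end

section
/- Consider the one-dimensional election with n voters at positions 1, 2, ..., n and m candidates at positions i·(n/m) for i = 1, ..., m (where m divides n and m ≥ 2k). For every committee T of k candidates, some voter's best-ranked committee member has rank at least m/(2k). -/
/-!
Put the voter on top of a candidate `j` that is at index distance at least `t = ⌊(m - 1)/(2k)⌋`
from every member of `T`; such a `j` exists because the `k` index balls of radius `t` around the
members of `T` hold at most `k (2t - 1) < m` indices. All pairwise distances are multiples of the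
spacing `n / m`, so the (at least `t`) candidates at index distance less than `t` from `j` are all
strictly closer to the voter than any member of `T`, and `t + 1 ≥ m / (2k)`.
-/

open Finset

theorem Nat.cast_dist {R : Type*} [Ring R] [LinearOrder R] [IsStrictOrderedRing R] (a b : ℕ) :
    (Nat.dist a b : R) = |(a : R) - b| := by
  rcases le_total a b with h | h
  · rw [Nat.dist_eq_sub_of_le h, abs_sub_comm, abs_of_nonneg (sub_nonneg.2 (by exact_mod_cast h)),
      Nat.cast_sub h]
  · rw [Nat.dist_eq_sub_of_le_right h, abs_of_nonneg (sub_nonneg.2 (by exact_mod_cast h)),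
      Nat.cast_sub h]

theorem Nat.cast_div_le_sub_one_div_add_one {K : Type*} [Field K] [LinearOrder K]
    [IsStrictOrderedRing K] (a b : ℕ) : (a : K) / b ≤ ((a - 1) / b : ℕ) + 1 := by
  rcases Nat.eq_zero_or_pos b with rfl | hb
  · simp only [Nat.cast_zero, div_zero]
    positivity
  have hab : a ≤ b * ((a - 1) / b + 1) := by
    have := Nat.lt_mul_div_succ (a - 1) hb
    omega
  rw [div_le_iff₀ (by exact_mod_cast hb), mul_comm]
  exact_mod_cast hab

section IndexBalls

variable {m : ℕ}

theorem card_filter_dist_lt_le (a t : ℕ) : #{c : Fin m | Nat.dist a c < t} ≤ 2 * t - 1 := by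
  calc #{c : Fin m | Nat.dist a c < t}
      ≤ #(Ico (a + 1 - t) (a + t)) := by
        refine card_le_card_of_injOn Fin.val (fun c hc => ?_) Fin.val_injective.injOn
        simp only [coe_filter, mem_univ, true_and, Set.mem_ofPred_eq, coe_Ico, Set.mem_Ico] at hc ⊢
        unfold Nat.dist at hc
        omega
    _ ≤ 2 * t - 1 := by
        rw [Nat.card_Ico]
        omega

theorem le_card_filter_dist_lt {t : ℕ} (ht : t ≤ m) (j : Fin m) :
    t ≤ #{c : Fin m | Nat.dist j c < t} := by
  set a := min (j : ℕ) (m - t)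
  calc t = #(Ico a (a + t)) := by simp
    _ ≤ #((univ.filter fun c : Fin m => Nat.dist j c < t).map Fin.valEmbedding) := by
        refine card_le_card fun x hx => ?_
        have hj := j.isLt
        rw [mem_Ico] at hx
        have hxm : x < m := by omega
        have hjx : Nat.dist j x < t := by unfold Nat.dist; omega
        exact mem_map.2 ⟨⟨x, hxm⟩, mem_filter.2 ⟨mem_univ _, hjx⟩, rfl⟩
    _ = #{c : Fin m | Nat.dist j c < t} := card_map _

theorem exists_forall_le_dist (T : Finset (Fin m)) {t : ℕ} (h : #T * (2 * t - 1) < m) :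
    ∃ j : Fin m, ∀ i ∈ T, t ≤ Nat.dist j i := by
  by_contra! hnear
  have hcover : (univ : Finset (Fin m)) ⊆ T.biUnion fun i => {c : Fin m | Nat.dist i c < t} :=
    fun j _ => by
      obtain ⟨i, hi, hji⟩ := hnear j
      exact mem_biUnion.2 ⟨i, hi, by simpa [Nat.dist_comm] using hji⟩
  have hsum := (card_le_card hcover).trans <| card_biUnion_le.trans <|
    sum_le_card_nsmul _ _ _ fun i _ => card_filter_dist_lt_le (m := m) i t
  simp only [card_univ, Fintype.card_fin, smul_eq_mul] at hsum
  omega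

theorem le_card_filter_dist_lt_dist {t : ℕ} (ht : t ≤ m) {i j : Fin m} (hij : t ≤ Nat.dist j i) :
    t ≤ #{c : Fin m | Nat.dist j c < Nat.dist j i} :=
  (le_card_filter_dist_lt ht j).trans <|
    card_le_card fun c hc => by
      simp only [mem_filter, mem_univ, true_and] at hc ⊢
      omega

end IndexBalls

theorem abs_grid_sub_lt_abs_grid_sub_iff {d : ℝ} (hd : 0 < d) (j c i : ℕ) :
    |((j : ℝ) + 1) * d - ((c : ℝ) + 1) * d| < |((j : ℝ) + 1) * d - ((i : ℝ) + 1) * d| ↔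
      Nat.dist j c < Nat.dist j i := by
  simp only [← sub_mul, add_sub_add_right_eq_sub, abs_mul, abs_of_pos hd, ← Nat.cast_dist]
  rw [mul_lt_mul_iff_left₀ hd]
  exact Nat.cast_lt

theorem one_dim_lower_bound_general (n m k : ℕ) (hn : 0 < n) (hdvd : m ∣ n)
    (T : Finset (Fin m)) (hT : T.card = k) :
    ∃ v : Fin n, ∀ i ∈ T,
      (m : ℝ) / (2 * k) ≤
        ((Finset.univ.filter fun j : Fin m =>
          |((v : ℝ) + 1) - ((j : ℝ) + 1) * ((n : ℝ) / m)| <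
            |((v : ℝ) + 1) - ((i : ℝ) + 1) * ((n : ℝ) / m)|).card : ℝ) + 1 := by
  obtain ⟨d, rfl⟩ := hdvd
  have hm : 0 < m := Nat.pos_of_mul_pos_right hn
  have hd : 0 < d := Nat.pos_of_mul_pos_left hn
  set t := (m - 1) / (2 * k)
  obtain ⟨j, hj⟩ : ∃ j : Fin m, ∀ i ∈ T, t ≤ Nat.dist j i := by
    refine exists_forall_le_dist T ?_
    calc #T * (2 * t - 1) ≤ k * (2 * t) := hT ▸ Nat.mul_le_mul_left _ (Nat.sub_le _ _)
      _ = t * (2 * k) := by ring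
      _ ≤ m - 1 := Nat.div_mul_le_self _ _
      _ < m := by omega
  have hvoter_range : 1 ≤ (j + 1) * d ∧ (j + 1) * d ≤ m * d :=
    ⟨Nat.mul_pos (Nat.succ_pos _) hd, Nat.mul_le_mul_right d j.isLt⟩
  refine ⟨⟨(j + 1) * d - 1, by omega⟩, fun i hi => ?_⟩
  have hvoter : (((j + 1) * d - 1 : ℕ) : ℝ) + 1 = ((j : ℝ) + 1) * d := by
    rw [Nat.cast_sub hvoter_range.1]
    push_cast
    ring
  have hspacing : ((m * d : ℕ) : ℝ) / m = d := by
    push_cast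
    field_simp
  simp only [hvoter, hspacing, abs_grid_sub_lt_abs_grid_sub_iff (Nat.cast_pos.2 hd)]
  calc (m : ℝ) / (2 * k) ≤ t + 1 := by exact_mod_cast Nat.cast_div_le_sub_one_div_add_one m (2 * k)
    _ ≤ _ := by
      gcongr
      exact_mod_cast le_card_filter_dist_lt_dist ((Nat.div_le_self _ _).trans (Nat.sub_le _ _))
        (hj i hi)

/-- One-dimensional election with `n` voters at positions `1, …, n` and
`m` candidates at positions `i·(n/m)` for `i = 1, …, m`, where `m ∣ n`, `n > 0` and
`m ≥ 2k`. For every committee `T` of `k` candidates, some voter's best-ranked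
committee member has rank at least `m/(2k)` (rank via the count of strictly closer
candidates). -/
theorem one_dim_lower_bound (n m k : ℕ) (hn : 0 < n) (hdvd : m ∣ n) (hk : 1 ≤ k)
    (hmk : 2 * k ≤ m) (T : Finset (Fin m)) (hT : T.card = k) :
    ∃ v : Fin n, ∀ i ∈ T,
      (m : ℝ) / (2 * k) ≤
        ((Finset.univ.filter fun j : Fin m =>
          |((v : ℝ) + 1) - ((j : ℝ) + 1) * ((n : ℝ) / m)| <
            |((v : ℝ) + 1) - ((i : ℝ) + 1) * ((n : ℝ) / m)|).card : ℝ) + 1 :=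
  one_dim_lower_bound_general n m k hn hdvd T hT
end

section
/- Greedy selection lemma (3-optimality): Let V be a finite set of voters and C a finite set of candidates in a metric space. For each voter v let d*_v ≥ 0 be a value such that some candidate lies within distance d*_v of v. Suppose there exists a partition of V into k parts V_1, ..., V_k and centers c_1, ..., c_k ∈ C with dist(c_i, v) ≤ d*_v for all v ∈ V_i. Then the greedy algorithm that repeatedly picks an unsatisfied voter v̂ minimizing d*_{v̂} and adds some candidate within distance d*_{v̂} of v̂ (a voter v being satisfied by T when some c ∈ T has dist(c, v) ≤ 3·d*_v) terminates after at most k iterations with all voters satisfied. -/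
open scoped Classical

/-- greedy selection lemma, 3-optimality: given a partition of the
voters into `k` parts each served by a center within `d*_v`, any run of the greedy
algorithm (repeatedly pick an unsatisfied voter minimizing `d*`, add a candidate
within `d*` of it; `v` is satisfied by `T` if some `c ∈ T` has `dist c v ≤ 3 d*_v`)
lasts at most `k` iterations, and after `k` iterations every voter is satisfied. -/
theorem greedy_three_optimal {M : Type*} [MetricSpace M]
    (V C : Finset M) (dstar : M → ℝ)
    (hd0 : ∀ v ∈ V, 0 ≤ dstar v)
    (hdc : ∀ v ∈ V, ∃ c ∈ C, dist c v ≤ dstar v)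
    (k : ℕ) (P : Fin k → Finset M) (cen : Fin k → M)
    (hP : ∀ i, P i ⊆ V)
    (hpart : ∀ v ∈ V, ∃! i, v ∈ P i)
    (hcen : ∀ i, cen i ∈ C)
    (hrep : ∀ i, ∀ v ∈ P i, dist (cen i) v ≤ dstar v)
    (r : ℕ) (vhat chat : ℕ → M)
    (hv : ∀ j < r, vhat j ∈ V)
    (hunsat : ∀ j < r,
      ¬ ∃ c ∈ (Finset.range j).image chat, dist c (vhat j) ≤ 3 * dstar (vhat j))
    (hmin : ∀ j < r, ∀ v ∈ V,
      (¬ ∃ c ∈ (Finset.range j).image chat, dist c v ≤ 3 * dstar v) →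
      dstar (vhat j) ≤ dstar v)
    (hc : ∀ j < r, chat j ∈ C ∧ dist (chat j) (vhat j) ≤ dstar (vhat j)) :
    r ≤ k ∧ (r = k → ∀ v ∈ V, ∃ c ∈ (Finset.range r).image chat,
      dist c v ≤ 3 * dstar v) := by
  have mono : ∀ {a b : ℕ}, a ≤ b → ∀ v : M,
      (¬ ∃ c ∈ (Finset.range b).image chat, dist c v ≤ 3 * dstar v) →
      ¬ ∃ c ∈ (Finset.range a).image chat, dist c v ≤ 3 * dstar v := by
    rintro a b hab v hb ⟨c, hc1, hc2⟩
    exact hb ⟨c, Finset.image_subset_image (Finset.range_subset_range.2 hab) hc1, hc2⟩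
  have key : ∀ j < r, ∀ i : Fin k, vhat j ∈ P i → ∀ v ∈ P i,
      (¬ ∃ c ∈ (Finset.range j).image chat, dist c v ≤ 3 * dstar v) →
      dist (chat j) v ≤ 3 * dstar v := by
    intro j hj i hji v hvi hun
    have hvV := hP i hvi
    have h1 := (hc j hj).2
    have h2 := hrep i _ hji
    have h3 := hrep i v hvi
    have h4 := hmin j hj v hvV hun
    calc dist (chat j) v ≤ dist (chat j) (vhat j) + dist (vhat j) v :=
          dist_triangle _ _ _
      _ ≤ dist (chat j) (vhat j) + (dist (vhat j) (cen i) + dist (cen i) v) := by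
          linarith [dist_triangle (vhat j) (cen i) v]
      _ ≤ dstar (vhat j) + (dstar (vhat j) + dstar v) := by
          rw [dist_comm (vhat j) (cen i)]; linarith
      _ ≤ 3 * dstar v := by linarith
  have hidx : ∀ j : Fin r, ∃ i : Fin k, vhat j ∈ P i := fun j =>
    (hpart _ (hv j j.2)).exists
  classical
  let f : Fin r → Fin k := fun j => (hidx j).choose
  have hf : ∀ j : Fin r, vhat j ∈ P (f j) := fun j => (hidx j).choose_spec
  have finj : Function.Injective f := by
    intro j j' hjj'
    by_contra hne
    rcases (Ne.lt_or_gt (fun h => hne (Fin.ext h) : (j:ℕ) ≠ (j':ℕ))) with h | h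
    · have hun := mono (le_of_lt h) (vhat j') (hunsat j' j'.2)
      have := key j j.2 (f j) (hf j) (vhat j') (hjj' ▸ hf j') hun
      exact hunsat j' j'.2 ⟨chat j,
        Finset.mem_image_of_mem _ (Finset.mem_range.2 h), this⟩
    · have hun := mono (le_of_lt h) (vhat j) (hunsat j j.2)
      have := key j' j'.2 (f j') (hf j') (vhat j) (hjj' ▸ hf j) hun
      exact hunsat j j.2 ⟨chat j',
        Finset.mem_image_of_mem _ (Finset.mem_range.2 h), this⟩
  have hrk : r ≤ k := by
    simpa using Fintype.card_le_of_injective f finj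
  refine ⟨hrk, fun hrkeq v hvV => ?_⟩
  by_contra hun
  obtain ⟨i, hvi, -⟩ := hpart v hvV
  have fbij : Function.Bijective f :=
    (Fintype.bijective_iff_injective_and_card f).2 ⟨finj, by simp [hrkeq]⟩
  obtain ⟨j, hj⟩ := fbij.2 i
  have hji : vhat j ∈ P i := hj ▸ hf j
  have hunj := mono (le_of_lt j.2) v hun
  have := key j j.2 i hji v hvi hunj
  exact hun ⟨chat j, Finset.mem_image_of_mem _ (Finset.mem_range.2 j.2), this⟩
end

section
/- In the greedy 3-optimal committee algorithm, the voters v̂_1, ..., v̂_r chosen in successive iterations are pairwise separated: no two of them belong to the same part V_i of the partition induced by an optimal committee. Consequently r ≤ k. -/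
open scoped Classical

/-- In the greedy 3-optimal committee algorithm, the voters
`v̂_1, …, v̂_r` chosen in successive iterations are pairwise separated (no two lie in
the same part `V_i` of the partition induced by an optimal committee); consequently
`r ≤ k`. -/
theorem greedy_voters_separated {M : Type*} [MetricSpace M]
    (V C : Finset M) (dstar : M → ℝ)
    (hd0 : ∀ v ∈ V, 0 ≤ dstar v)
    (k : ℕ) (P : Fin k → Finset M) (cen : Fin k → M)
    (hP : ∀ i, P i ⊆ V)
    (hpart : ∀ v ∈ V, ∃! i, v ∈ P i)
    (hcen : ∀ i, cen i ∈ C)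
    (hrep : ∀ i, ∀ v ∈ P i, dist (cen i) v ≤ dstar v)
    (r : ℕ) (vhat chat : ℕ → M)
    (hv : ∀ j < r, vhat j ∈ V)
    (hunsat : ∀ j < r,
      ¬ ∃ c ∈ (Finset.range j).image chat, dist c (vhat j) ≤ 3 * dstar (vhat j))
    (hmin : ∀ j < r, ∀ v ∈ V,
      (¬ ∃ c ∈ (Finset.range j).image chat, dist c v ≤ 3 * dstar v) →
      dstar (vhat j) ≤ dstar v)
    (hc : ∀ j < r, chat j ∈ C ∧ dist (chat j) (vhat j) ≤ dstar (vhat j)) :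
    (∀ j < r, ∀ j' < r, j ≠ j' → ∀ i, ¬ (vhat j ∈ P i ∧ vhat j' ∈ P i)) ∧ r ≤ k := by
  have sep : ∀ j j', j < j' → j' < r → ∀ i, ¬ (vhat j ∈ P i ∧ vhat j' ∈ P i) := by
    intro j j' hjj' hj' i ⟨h1, h2⟩
    have hjr : j < r := hjj'.trans hj'
    -- vhat j' was unsatisfied at iteration j (since range j ⊆ range j')
    have hunsat_j : ¬ ∃ c ∈ (Finset.range j).image chat,
        dist c (vhat j') ≤ 3 * dstar (vhat j') := by
      rintro ⟨c, hcm, hcd⟩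
      exact hunsat j' hj' ⟨c, Finset.image_subset_image
        (Finset.range_subset_range.mpr hjj'.le) hcm, hcd⟩
    have hdle : dstar (vhat j) ≤ dstar (vhat j') :=
      hmin j hjr (vhat j') (hv j' hj') hunsat_j
    apply hunsat j' hj'
    refine ⟨chat j, Finset.mem_image_of_mem chat (Finset.mem_range.mpr hjj'), ?_⟩
    have h3 : dist (chat j) (vhat j') ≤
        dist (chat j) (vhat j) + dist (vhat j) (cen i) + dist (cen i) (vhat j') :=
      dist_triangle4 _ _ _ _
    have e1 : dist (chat j) (vhat j) ≤ dstar (vhat j) := (hc j hjr).2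
    have e2 : dist (vhat j) (cen i) ≤ dstar (vhat j) := by
      rw [dist_comm]; exact hrep i _ h1
    have e3 : dist (cen i) (vhat j') ≤ dstar (vhat j') := hrep i _ h2
    linarith
  constructor
  · intro j hj j' hj' hne i h
    rcases lt_or_gt_of_ne hne with hlt | hgt
    · exact sep j j' hlt hj' i h
    · exact sep j' j hgt hj i ⟨h.2, h.1⟩
  · -- injectivity argument
    have : ∀ j : Fin r, ∃ i, vhat j ∈ P i := fun j =>
      ((hpart (vhat j) (hv j j.2)).exists)
    choose f hf using this
    have hinj : Function.Injective f := by
      intro a b hab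
      by_contra hne
      rcases lt_or_gt_of_ne (fun h => hne (Fin.ext h) : (a:ℕ) ≠ b) with hlt | hgt
      · exact sep a b hlt b.2 (f a) ⟨hf a, hab ▸ hf b⟩
      · exact sep b a hgt a.2 (f b) ⟨hf b, hab ▸ hf a⟩
    simpa using Fintype.card_le_of_injective f hinj
end
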